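/- arXiv:2303.13036 — 5 statements merged into one kernel-verified Lean document; each statement's English description precedes it below -/
import Mathlib

section
/- Let x be a real-valued unimodal random variable with finite mean E[x] and finite nonzero standard deviation σ. Then for any λ > √(5/3), P(x - E[x] ≥ λσ) ≤ 4/(9(λ²+1)). -/
open MeasureTheory Set
open scoped ProbabilityTheory

/-- One-sided Vysochanskij–Petunin inequality. -/
theorem stmt0 {Ω : Type*} [MeasureSpace Ω] [IsProbabilityMeasure (ℙ : Measure Ω)]
    (x : Ω → ℝ) (hmeas : Measurable x)
    (hint : Integrable x) (hint2 : Integrable (fun ω => (x ω) ^ 2))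
    -- unimodality: the CDF is convex left of a mode m and concave right of it
    (m : ℝ)
    (hconv : ConvexOn ℝ (Set.Iio m) (fun t => (ℙ {ω | x ω ≤ t}).toReal))
    (hconc : ConcaveOn ℝ (Set.Ioi m) (fun t => (ℙ {ω | x ω ≤ t}).toReal))
    (σ : ℝ) (hσ : σ = Real.sqrt (∫ ω, (x ω - ∫ ω', x ω') ^ 2)) (hσpos : σ ≠ 0)
    -- the two-sided Vysochanskij–Petunin inequality, which may be assumed
    (hVP : ∀ a r : ℝ, r ^ 2 ≥ (8 / 3) * ∫ ω, (x ω - a) ^ 2 →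
      (ℙ {ω | |x ω - a| ≥ r}).toReal ≤ (4 / 9) * (∫ ω, (x ω - a) ^ 2) / r ^ 2)
    (lam : ℝ) (hlam : lam > Real.sqrt (5 / 3)) :
    (ℙ {ω | x ω - (∫ ω', x ω') ≥ lam * σ}).toReal ≤ 4 / (9 * (lam ^ 2 + 1)) := by
  set μ : ℝ := ∫ ω', x ω' with hμ
  -- general formula for second moments about a point
  have key : ∀ b : ℝ, (∫ ω, (x ω - b) ^ 2) = (∫ ω, (x ω) ^ 2) - 2 * b * μ + b ^ 2 := by
    intro b
    have h1 : (fun ω => (x ω - b) ^ 2)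
        = fun ω => ((x ω) ^ 2 - (2 * b) * (x ω)) + b ^ 2 := by
      funext ω; ring
    have hIb : Integrable (fun ω => (x ω) ^ 2 - (2 * b) * (x ω)) :=
      hint2.sub (hint.const_mul (2 * b))
    rw [h1, integral_add hIb (integrable_const _),
      integral_sub hint2 (hint.const_mul (2 * b)), integral_const_mul, integral_const]
    simp [hμ]
  have hlampos : 0 < lam := lt_of_le_of_lt (Real.sqrt_nonneg _) hlam
  have hlam2 : (5 : ℝ) / 3 < lam ^ 2 := (Real.sqrt_lt' hlampos).mp hlam
  have hσnn : 0 ≤ Real.sqrt (∫ ω, (x ω - μ) ^ 2) := Real.sqrt_nonneg _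
  have hσ0 : 0 < σ := by
    rcases lt_or_eq_of_le (hσ ▸ hσnn) with h | h
    · exact h
    · exact absurd h.symm hσpos
  have hVnn : 0 ≤ ∫ ω, (x ω - μ) ^ 2 :=
    integral_nonneg fun ω => sq_nonneg _
  have hσ2 : σ ^ 2 = ∫ ω, (x ω - μ) ^ 2 := by
    rw [hσ]; exact Real.sq_sqrt hVnn
  -- shifted center and radius
  set a : ℝ := μ - σ / lam with ha
  set r : ℝ := lam * σ + σ / lam with hr
  have hlamne : lam ≠ 0 := ne_of_gt hlampos
  have hE2 : (∫ ω, (x ω) ^ 2) = σ ^ 2 + μ ^ 2 := by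
    have h := key μ
    rw [← hσ2] at h
    linear_combination -h
  have hIa : (∫ ω, (x ω - a) ^ 2) = σ ^ 2 + (σ / lam) ^ 2 := by
    rw [key a, hE2, ha]
    field_simp
    ring
  have hrpos : 0 < r := by
    rw [hr]; positivity
  have hcond : r ^ 2 ≥ (8 / 3) * ∫ ω, (x ω - a) ^ 2 := by
    rw [hIa, hr]
    set c : ℝ := σ / lam with hc
    have hc1 : lam * c = σ := by rw [hc]; field_simp
    have hc2 : c ^ 2 * lam ^ 2 = σ ^ 2 := by rw [hc]; field_simp
    have h53 : (0:ℝ) ≤ lam ^ 2 - 5 / 3 := by linarith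
    nlinarith [hc1, hc2, mul_nonneg h53 (sq_nonneg c), mul_nonneg h53 (sq_nonneg σ),
      sq_nonneg σ, hσ0.le, mul_nonneg hσ0.le hσ0.le]
  have hbound := hVP a r hcond
  have hsub : {ω | x ω - μ ≥ lam * σ} ⊆ {ω | |x ω - a| ≥ r} := by
    intro ω hω
    simp only [Set.mem_setOf_eq] at hω ⊢
    have h1 : x ω - a = (x ω - μ) + σ / lam := by rw [ha]; ring
    have h2 : r ≤ x ω - a := by rw [h1, hr]; linarith
    calc r ≤ x ω - a := h2
      _ ≤ |x ω - a| := le_abs_self _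
  have hmono : (ℙ {ω | x ω - μ ≥ lam * σ}).toReal ≤ (ℙ {ω | |x ω - a| ≥ r}).toReal :=
    ENNReal.toReal_mono (measure_ne_top _ _) (measure_mono hsub)
  have hfinal : (4 / 9) * (∫ ω, (x ω - a) ^ 2) / r ^ 2 = 4 / (9 * (lam ^ 2 + 1)) := by
    rw [hIa, hr]
    have hne : lam ^ 2 + 1 ≠ 0 := by positivity
    field_simp
  calc (ℙ {ω | x ω - μ ≥ lam * σ}).toReal
      ≤ (ℙ {ω | |x ω - a| ≥ r}).toReal := hmono
    _ ≤ (4 / 9) * (∫ ω, (x ω - a) ^ 2) / r ^ 2 := hbound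
    _ = 4 / (9 * (lam ^ 2 + 1)) := hfinal
end

section
/- Fix N ≥ 2 and N* = N+1. The cubic equation (2/√N*)·λ³ + 3λ² − 1 = 0 has exactly one positive real root, given by λ = √N*·(cos((1/3)·arccos(−(N−1)/N*)) − 1/2). -/
theorem stmt6 (N : ℕ) (hN : 2 ≤ N)
    (Θ : ℝ)
    (hΘ : Θ = Real.sqrt ((N : ℝ) + 1) *
      (Real.cos ((1 / 3) * Real.arccos (-(((N : ℝ) - 1) / ((N : ℝ) + 1)))) - 1 / 2)) :
    0 < Θ ∧ (2 / Real.sqrt ((N : ℝ) + 1)) * Θ ^ 3 + 3 * Θ ^ 2 - 1 = 0 ∧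
    ∀ lam : ℝ, 0 < lam →
      (2 / Real.sqrt ((N : ℝ) + 1)) * lam ^ 3 + 3 * lam ^ 2 - 1 = 0 → lam = Θ := by
  have hN2 : (2 : ℝ) ≤ (N : ℝ) := by exact_mod_cast hN
  set s := Real.sqrt ((N : ℝ) + 1) with hsdef
  have hNpos : (0 : ℝ) < (N : ℝ) + 1 := by linarith
  have hs0 : 0 < s := Real.sqrt_pos.mpr hNpos
  have hs2 : s ^ 2 = (N : ℝ) + 1 := Real.sq_sqrt (le_of_lt hNpos)
  set a : ℝ := -(((N : ℝ) - 1) / ((N : ℝ) + 1)) with hadef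
  have ha1 : -1 < a := by
    rw [hadef, neg_lt, neg_neg]
    rw [div_lt_one hNpos]; linarith
  have ha2 : a ≤ 1 := by
    rw [hadef]
    have : 0 ≤ ((N : ℝ) - 1) / ((N : ℝ) + 1) := div_nonneg (by linarith) (by linarith)
    linarith
  set θ : ℝ := (1 / 3) * Real.arccos a with hθdef
  set c : ℝ := Real.cos θ with hcdef
  -- triple angle
  have hcos3 : 4 * c ^ 3 - 3 * c = a := by
    have h3 : 3 * θ = Real.arccos a := by rw [hθdef]; ring
    have := Real.cos_three_mul θ
    rw [h3, Real.cos_arccos (le_of_lt ha1) ha2] at this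
    linarith [this]
  -- bounds on θ
  have hθ0 : 0 ≤ θ := by
    have := Real.arccos_nonneg a
    rw [hθdef]; positivity
  have hθlt : θ < Real.pi / 3 := by
    have h : Real.arccos a < Real.pi := by
      rw [Real.arccos]
      have := Real.neg_pi_div_two_lt_arcsin.mpr ha1
      linarith
    rw [hθdef]; linarith
  have hc : 1 / 2 < c := by
    have := Real.cos_lt_cos_of_nonneg_of_le_pi hθ0 (by linarith [Real.pi_pos] : Real.pi / 3 ≤ Real.pi) hθlt
    rw [Real.cos_pi_div_three] at this
    exact this
  have hΘpos : 0 < Θ := by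
    rw [hΘ]
    have : 0 < c - 1 / 2 := by linarith
    positivity
  have hsne : s ≠ 0 := ne_of_gt hs0
  have ha' : ((N : ℝ) + 1) * a = -((N : ℝ) - 1) := by
    rw [hadef]; field_simp
  have key : 2 * Θ ^ 3 + 3 * s * Θ ^ 2 - s = 0 := by
    rw [hΘ]
    linear_combination (s ^ 3 / 2) * hcos3 + (s * (a + 1) / 2) * hs2 + (s / 2) * ha'
  have heqΘ : (2 / s) * Θ ^ 3 + 3 * Θ ^ 2 - 1 = 0 := by
    field_simp
    linear_combination key
  refine ⟨hΘpos, heqΘ, ?_⟩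
  intro lam hlam heq
  have h1 : 2 * lam ^ 3 + 3 * s * lam ^ 2 - s = 0 := by
    have h := heq
    field_simp at h
    linear_combination h
  have hfac : (lam - Θ) * (2 * (lam ^ 2 + lam * Θ + Θ ^ 2) + 3 * s * (lam + Θ)) = 0 := by
    linear_combination h1 - key
  have hpos : 0 < 2 * (lam ^ 2 + lam * Θ + Θ ^ 2) + 3 * s * (lam + Θ) := by
    nlinarith [mul_pos hlam hΘpos, mul_pos hs0 (add_pos hlam hΘpos)]
  have := mul_eq_zero.mp hfac
  rcases this with h | h
  · linarith
  · linarith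
end

section
/- Fix N ≥ 2, N* = N+1, and let Θ(N) = √N*·(cos((1/3)·arccos(−(N−1)/N*)) − 1/2). Then for all λ > Θ(N), the function f(λ) = 4(√N* + λ)²/(9(λ²N + (√N* + λ)²)) is strictly convex, i.e. f''(λ) > 0. -/
set_option maxHeartbeats 1000000


theorem stmt7 (N : ℕ) (hN : 2 ≤ N)
    (Θ : ℝ)
    (hΘ : Θ = Real.sqrt ((N : ℝ) + 1) *
      (Real.cos ((1 / 3) * Real.arccos (-(((N : ℝ) - 1) / ((N : ℝ) + 1)))) - 1 / 2))
    (f : ℝ → ℝ)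
    (hf : ∀ lam : ℝ, f lam = 4 * (Real.sqrt ((N : ℝ) + 1) + lam) ^ 2 /
      (9 * (lam ^ 2 * (N : ℝ) + (Real.sqrt ((N : ℝ) + 1) + lam) ^ 2))) :
    ∀ lam : ℝ, Θ < lam → 0 < deriv (deriv f) lam := by
  intro lam hlam
  set s : ℝ := Real.sqrt ((N : ℝ) + 1) with hs_def
  have hN1 : (0:ℝ) < (N : ℝ) + 1 := by positivity
  have hNpos : (0:ℝ) < (N : ℝ) := by
    have : (2:ℝ) ≤ (N:ℝ) := by exact_mod_cast hN
    linarith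
  have hs : s ^ 2 = (N : ℝ) + 1 := Real.sq_sqrt (le_of_lt hN1)
  have hspos : 0 < s := Real.sqrt_pos.mpr hN1
  have hD : ∀ x : ℝ, 0 < x ^ 2 * (N : ℝ) + (s + x) ^ 2 := by
    intro x
    rcases eq_or_ne x 0 with h | h
    · simp [h]
      nlinarith [hs]
    · have h1 : 0 < x ^ 2 * (N : ℝ) := by positivity
      nlinarith [sq_nonneg (s + x)]
  -- the function written with s
  have hfe : f = fun y : ℝ => 4 * (s + y) ^ 2 / (9 * (y ^ 2 * (N : ℝ) + (s + y) ^ 2)) :=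
    funext hf
  -- first derivative
  have hf1 : ∀ x : ℝ, HasDerivAt f
      (-(8 * (N : ℝ) * s / 9) * (x * (s + x)) / (x ^ 2 * (N : ℝ) + (s + x) ^ 2) ^ 2) x := by
    intro x
    rw [hfe]
    have h1 : HasDerivAt (fun y : ℝ => 4 * (s + y) ^ 2) (8 * (s + x)) x := by
      have := (((hasDerivAt_id' x).const_add s).pow 2).const_mul (4:ℝ)
      refine this.congr_deriv ?_
      ring
    have h2 : HasDerivAt (fun y : ℝ => 9 * (y ^ 2 * (N : ℝ) + (s + y) ^ 2))
        (9 * (2 * x * (N : ℝ) + 2 * (s + x))) x := by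
      have ha : HasDerivAt (fun y : ℝ => y ^ 2 * (N : ℝ)) (2 * x * (N : ℝ)) x := by
        have := (hasDerivAt_pow 2 x).mul_const (N : ℝ)
        refine this.congr_deriv ?_
        ring
      have hb : HasDerivAt (fun y : ℝ => (s + y) ^ 2) (2 * (s + x)) x := by
        have := ((hasDerivAt_id' x).const_add s).pow 2
        refine this.congr_deriv ?_
        ring
      have := (ha.add hb).const_mul (9:ℝ)
      exact this
    have hne : 9 * (x ^ 2 * (N : ℝ) + (s + x) ^ 2) ≠ 0 := by
      have := hD x; positivity
    have h3 := h1.div h2 hne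
    refine h3.congr_deriv ?_
    have hD0 := hD x
    field_simp
    ring
  have hdf : deriv f = fun x : ℝ =>
      -(8 * (N : ℝ) * s / 9) * (x * (s + x)) / (x ^ 2 * (N : ℝ) + (s + x) ^ 2) ^ 2 :=
    funext fun x => (hf1 x).deriv
  -- second derivative at lam
  have h3 : HasDerivAt (fun y : ℝ => -(8 * (N : ℝ) * s / 9) * (y * (s + y)))
      (-(8 * (N : ℝ) * s / 9) * (s + 2 * lam)) lam := by
    have := ((hasDerivAt_id' lam).mul ((hasDerivAt_id' lam).const_add s)).const_mul
      (-(8 * (N : ℝ) * s / 9))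
    refine this.congr_deriv ?_
    ring
  have h4 : HasDerivAt (fun y : ℝ => (y ^ 2 * (N : ℝ) + (s + y) ^ 2) ^ 2)
      (2 * (lam ^ 2 * (N : ℝ) + (s + lam) ^ 2) ^ 1 * (2 * lam * (N : ℝ) + 2 * (s + lam))) lam := by
    have ha : HasDerivAt (fun y : ℝ => y ^ 2 * (N : ℝ) + (s + y) ^ 2)
        (2 * lam * (N : ℝ) + 2 * (s + lam)) lam := by
      have ha1 : HasDerivAt (fun y : ℝ => y ^ 2 * (N : ℝ)) (2 * lam * (N : ℝ)) lam := by
        have := (hasDerivAt_pow 2 lam).mul_const (N : ℝ)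
        refine this.congr_deriv ?_
        ring
      have ha2 : HasDerivAt (fun y : ℝ => (s + y) ^ 2) (2 * (s + lam)) lam := by
        have := ((hasDerivAt_id' lam).const_add s).pow 2
        refine this.congr_deriv ?_
        ring
      exact ha1.add ha2
    exact ha.pow 2
  have hne2 : (lam ^ 2 * (N : ℝ) + (s + lam) ^ 2) ^ 2 ≠ 0 := by
    have := hD lam; positivity
  have h5 := h3.div h4 hne2
  have hderiv2 : deriv (deriv f) lam =
      (-(8 * (N : ℝ) * s / 9) * (s + 2 * lam) * (lam ^ 2 * (N : ℝ) + (s + lam) ^ 2) ^ 2 -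
        -(8 * (N : ℝ) * s / 9) * (lam * (s + lam)) *
          (2 * (lam ^ 2 * (N : ℝ) + (s + lam) ^ 2) ^ 1 * (2 * lam * (N : ℝ) + 2 * (s + lam)))) /
      ((lam ^ 2 * (N : ℝ) + (s + lam) ^ 2) ^ 2) ^ 2 := by
    rw [hdf]
    exact h5.deriv
  rw [hderiv2]
  -- positivity of the cubic past Θ
  set c : ℝ := Real.cos ((1 / 3) * Real.arccos (-(((N : ℝ) - 1) / ((N : ℝ) + 1)))) with hc_def
  have hx1 : (-1 : ℝ) ≤ -(((N : ℝ) - 1) / ((N : ℝ) + 1)) := by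
    rw [neg_le, neg_neg]
    rw [div_le_one hN1]
    linarith
  have hx2 : -(((N : ℝ) - 1) / ((N : ℝ) + 1)) ≤ 1 := by
    have : 0 ≤ ((N : ℝ) - 1) / ((N : ℝ) + 1) := by
      have h2N : (2:ℝ) ≤ (N:ℝ) := by exact_mod_cast hN
      apply div_nonneg <;> linarith
    linarith
  have hxlt : (-1 : ℝ) < -(((N : ℝ) - 1) / ((N : ℝ) + 1)) := by
    rw [neg_lt, neg_neg]
    rw [div_lt_one hN1]
    linarith
  have harc := Real.arccos_nonneg (-(((N : ℝ) - 1) / ((N : ℝ) + 1)))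
  have harclt : Real.arccos (-(((N : ℝ) - 1) / ((N : ℝ) + 1))) < Real.pi := by
    rcases lt_or_eq_of_le (Real.arccos_le_pi (-(((N : ℝ) - 1) / ((N : ℝ) + 1)))) with h | h
    · exact h
    · exact absurd (Real.arccos_eq_pi.mp h) (not_le.mpr hxlt)
  have hc3 : 4 * c ^ 3 - 3 * c = -(((N : ℝ) - 1) / ((N : ℝ) + 1)) := by
    have h := Real.cos_three_mul ((1 / 3) * Real.arccos (-(((N : ℝ) - 1) / ((N : ℝ) + 1))))
    have h2 : (3 : ℝ) * ((1 / 3) * Real.arccos (-(((N : ℝ) - 1) / ((N : ℝ) + 1)))) =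
        Real.arccos (-(((N : ℝ) - 1) / ((N : ℝ) + 1))) := by ring
    rw [h2, Real.cos_arccos hx1 hx2] at h
    rw [← hc_def] at h
    linarith
  have hchalf : 1 / 2 < c := by
    have hcos : Real.cos (Real.pi / 3) <
        Real.cos ((1 / 3) * Real.arccos (-(((N : ℝ) - 1) / ((N : ℝ) + 1)))) := by
      apply Real.cos_lt_cos_of_nonneg_of_le_pi
      · positivity
      · linarith [Real.pi_pos]
      · linarith
    rwa [Real.cos_pi_div_three] at hcos
  have hΘpos : 0 < Θ := by
    rw [hΘ]
    have : 0 < c - 1 / 2 := by linarith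
    exact mul_pos hspos this
  have hc3' : ((N : ℝ) + 1) * (4 * c ^ 3 - 3 * c) = -((N : ℝ) - 1) := by
    rw [hc3]
    field_simp
  have hΘroot : 2 * Θ ^ 3 + 3 * s * Θ ^ 2 - s = 0 := by
    rw [hΘ]
    linear_combination (s / 2) * hc3' + (s * (4 * c ^ 3 - 3 * c + 1) / 2) * hs
  have hp : 0 < 2 * lam ^ 3 + 3 * s * lam ^ 2 - s := by
    nlinarith [hΘroot, mul_pos (sub_pos.2 hlam) hΘpos,
      mul_pos (mul_pos (sub_pos.2 hlam) hΘpos) hΘpos,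
      mul_pos (mul_pos (sub_pos.2 hlam) (sub_pos.2 hlam)) hΘpos,
      mul_pos (sub_pos.2 hlam) (mul_pos hspos hΘpos),
      mul_pos (mul_pos (sub_pos.2 hlam) (sub_pos.2 hlam)) (sub_pos.2 hlam),
      mul_pos (mul_pos (sub_pos.2 hlam) (sub_pos.2 hlam)) hspos,
      mul_pos (sub_pos.2 hlam) (mul_pos hΘpos hΘpos), hspos, hΘpos]
  -- rewrite the derivative value in a positive form
  have hN' : (N : ℝ) = s ^ 2 - 1 := by linarith
  have hVeq :
      (-(8 * (N : ℝ) * s / 9) * (s + 2 * lam) * (lam ^ 2 * (N : ℝ) + (s + lam) ^ 2) ^ 2 -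
        -(8 * (N : ℝ) * s / 9) * (lam * (s + lam)) *
          (2 * (lam ^ 2 * (N : ℝ) + (s + lam) ^ 2) ^ 1 * (2 * lam * (N : ℝ) + 2 * (s + lam)))) /
      ((lam ^ 2 * (N : ℝ) + (s + lam) ^ 2) ^ 2) ^ 2 =
      ((8 * (N : ℝ) * s * ((N : ℝ) + 1)) * (2 * lam ^ 3 + 3 * s * lam ^ 2 - s)) /
        (9 * (lam ^ 2 * (N : ℝ) + (s + lam) ^ 2) ^ 3) := by
    have hD0 := hD lam
    rw [hN'] at hD0 ⊢
    field_simp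
    ring
  rw [hVeq]
  apply div_pos
  · exact mul_pos (by positivity) hp
  · have := hD lam
    positivity
end

section
/- For every integer N ≥ 2 with N* = N+1, the inequality √(5N*)/(√(3N) − √5) ≥ √N*·(cos((1/3)·arccos(−(N−1)/N*)) − 1/2) holds. -/
open Real

lemma stmt8_aux (t u : ℝ) (ht : Real.sqrt 5 < t) (h1 : t ≤ Real.sqrt 3 * u)
    (hu : 0 ≤ u) (h2 : Real.sqrt 5 * u ≤ Real.sqrt (5 * (u ^ 2 + 1))) :
    π / 3 ≤ Real.sqrt (5 * (u ^ 2 + 1)) / (t - Real.sqrt 5) := by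
  have hd : 0 < t - Real.sqrt 5 := by linarith
  rw [le_div_iff₀ hd]
  have hpi : π ≤ Real.sqrt 15 := by
    nlinarith [Real.pi_lt_d2, Real.sq_sqrt (by norm_num : (0:ℝ) ≤ 15),
      Real.sqrt_nonneg 15, Real.pi_pos]
  have h15 : Real.sqrt 15 = Real.sqrt 5 * Real.sqrt 3 := by
    rw [← Real.sqrt_mul (by norm_num)]; norm_num
  have hs3 : Real.sqrt 3 * Real.sqrt 3 = 3 := Real.mul_self_sqrt (by norm_num)
  have hs3' : (0:ℝ) ≤ Real.sqrt 3 := Real.sqrt_nonneg 3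
  have hs5 : (0:ℝ) ≤ Real.sqrt 5 := Real.sqrt_nonneg 5
  have hπ : (0:ℝ) < π := Real.pi_pos
  calc π / 3 * (t - Real.sqrt 5) ≤ π / 3 * (Real.sqrt 3 * u) := by nlinarith
    _ ≤ Real.sqrt 15 / 3 * (Real.sqrt 3 * u) := by nlinarith
    _ = Real.sqrt 5 * u := by rw [h15]; field_simp; linear_combination u * hs3
    _ ≤ Real.sqrt (5 * (u ^ 2 + 1)) := h2

theorem stmt8 (N : ℕ) (hN : 2 ≤ N) (hs : Real.sqrt 5 < Real.sqrt (3 * (N : ℝ))) :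
    Real.sqrt (5 * ((N : ℝ) + 1)) / (Real.sqrt (3 * (N : ℝ)) - Real.sqrt 5) ≥
      Real.sqrt ((N : ℝ) + 1) *
        (Real.cos ((1 / 3) * Real.arccos (-(((N : ℝ) - 1) / ((N : ℝ) + 1)))) - 1 / 2) := by
  have hN2 : (2 : ℝ) ≤ (N : ℝ) := by exact_mod_cast hN
  have hNp : (0 : ℝ) < (N : ℝ) + 1 := by linarith
  set x : ℝ := ((N : ℝ) - 1) / ((N : ℝ) + 1) with hx_def
  have hx0 : 0 ≤ x := div_nonneg (by linarith) hNp.le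
  have hx1 : x ≤ 1 := by
    rw [hx_def, div_le_one hNp]; linarith
  set φ : ℝ := Real.arccos x with hφ_def
  have hφ0 : 0 ≤ φ := Real.arccos_nonneg x
  have hφpi2 : φ ≤ π / 2 := (Real.arccos_le_pi_div_two).2 hx0
  have hcosφ : Real.cos φ = x := Real.cos_arccos (by linarith) hx1
  -- sin(φ/2)^2 = 1/(N+1)
  have hsin_sq : Real.sin (φ / 2) ^ 2 = 1 / ((N : ℝ) + 1) := by
    have := Real.sin_sq_eq_half_sub (φ / 2)
    rw [show 2 * (φ / 2) = φ by ring, hcosφ] at this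
    rw [this, hx_def]
    field_simp
    ring
  have hsin_half_nonneg : 0 ≤ Real.sin (φ / 2) :=
    Real.sin_nonneg_of_nonneg_of_le_pi (by linarith) (by linarith [Real.pi_pos])
  have hsin_half : Real.sin (φ / 2) = Real.sqrt (1 / ((N : ℝ) + 1)) := by
    rw [← hsin_sq, Real.sqrt_sq hsin_half_nonneg]
  -- √(N+1) * sin(φ/2) = 1
  have hprod : Real.sqrt ((N : ℝ) + 1) * Real.sin (φ / 2) = 1 := by
    rw [hsin_half, ← Real.sqrt_mul hNp.le]
    rw [mul_one_div, div_self hNp.ne', Real.sqrt_one]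
  -- Jordan: φ ≤ π * sin(φ/2)
  have hJordan : φ ≤ π * Real.sin (φ / 2) := by
    have h := Real.mul_le_sin (x := φ / 2) (by linarith) (by linarith)
    have hπ : (0 : ℝ) < π := Real.pi_pos
    rw [div_mul_eq_mul_div, mul_comm] at h
    calc φ = π * (φ / 2 * 2 / π) := by field_simp
    _ ≤ π * Real.sin (φ / 2) := by
        apply mul_le_mul_of_nonneg_left _ hπ.le
        rw [div_le_iff₀ hπ] at *
        nlinarith [h]
  -- θ = arccos(-x) = π - φ
  have hθ : Real.arccos (-x) = π - φ := by rw [Real.arccos_neg]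
  -- cos(θ/3) - 1/2 ≤ φ/3
  have hcos_bound : Real.cos ((1 / 3) * Real.arccos (-x)) - 1 / 2 ≤ φ / 3 := by
    rw [hθ]
    have h13 : (1 / 3 : ℝ) * (π - φ) = (π - φ) / 3 := by ring
    rw [h13]
    have hhalf : (1 / 2 : ℝ) = Real.cos (π / 3) := (Real.cos_pi_div_three).symm
    rw [hhalf]
    have := Real.cos_sub_cos ((π - φ) / 3) (π / 3)
    have hsin1 : Real.sin (((π - φ) / 3 + π / 3) / 2) ≤ 1 := Real.sin_le_one _
    have key : (π / 3 - (π - φ) / 3) / 2 = φ / 6 := by ring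
    have hsin2 : Real.sin (φ / 6) ≤ φ / 6 := Real.sin_le (by positivity)
    have hsin2' : 0 ≤ Real.sin (φ / 6) := by
      apply Real.sin_nonneg_of_nonneg_of_le_pi
      · positivity
      · nlinarith [Real.pi_pos]
    have hrw : ((π - φ) / 3 - π / 3) / 2 = -(φ / 6) := by ring
    rw [hrw, Real.sin_neg] at this
    nlinarith [this, hsin1, hsin2, hsin2']
  -- RHS ≤ π/3
  have hsqrt_nonneg : 0 ≤ Real.sqrt ((N : ℝ) + 1) := Real.sqrt_nonneg _
  have hRHS : Real.sqrt ((N : ℝ) + 1) *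
      (Real.cos ((1 / 3) * Real.arccos (-x)) - 1 / 2) ≤ π / 3 := by
    calc Real.sqrt ((N : ℝ) + 1) * (Real.cos ((1 / 3) * Real.arccos (-x)) - 1 / 2)
        ≤ Real.sqrt ((N : ℝ) + 1) * (φ / 3) :=
          mul_le_mul_of_nonneg_left hcos_bound hsqrt_nonneg
      _ ≤ Real.sqrt ((N : ℝ) + 1) * (π * Real.sin (φ / 2) / 3) := by
          apply mul_le_mul_of_nonneg_left _ hsqrt_nonneg
          linarith
      _ = π / 3 * (Real.sqrt ((N : ℝ) + 1) * Real.sin (φ / 2)) := by ring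
      _ = π / 3 := by rw [hprod, mul_one]
  -- LHS ≥ π/3
  have hd : 0 < Real.sqrt (3 * (N : ℝ)) - Real.sqrt 5 := by linarith
  have hLHS : π / 3 ≤ Real.sqrt (5 * ((N : ℝ) + 1)) / (Real.sqrt (3 * (N : ℝ)) - Real.sqrt 5) := by
    have hu : (0:ℝ) ≤ Real.sqrt (N : ℝ) := Real.sqrt_nonneg _
    have hu2 : Real.sqrt (N : ℝ) ^ 2 = (N : ℝ) := Real.sq_sqrt (by linarith)
    have h1 : Real.sqrt (3 * (N : ℝ)) = Real.sqrt 3 * Real.sqrt (N : ℝ) := by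
      rw [← Real.sqrt_mul (by norm_num)]
    have h2 : Real.sqrt 5 * Real.sqrt (N : ℝ) ≤ Real.sqrt (5 * ((N : ℝ) + 1)) := by
      rw [← Real.sqrt_mul (by norm_num)]
      apply Real.sqrt_le_sqrt; nlinarith
    have := stmt8_aux (Real.sqrt (3 * (N : ℝ))) (Real.sqrt (N : ℝ)) hs h1.le hu
      (by rw [hu2]; exact h2)
    rw [hu2] at this
    exact this
  exact le_trans hRHS hLHS
end

section
/- Let y be a real random variable with E[y] = 0 and E[y²] = 1, and suppose y is unimodal. Then for any λ > √(5/3), P(y ≥ λ) ≤ 4/(9(λ²+1)). -/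
open MeasureTheory Set
open scoped ProbabilityTheory

theorem stmt13 {Ω : Type*} [MeasureSpace Ω] [IsProbabilityMeasure (ℙ : Measure Ω)]
    (y : Ω → ℝ) (hmeas : Measurable y)
    (hint : Integrable y) (hint2 : Integrable (fun ω => (y ω) ^ 2))
    (hmean : (∫ ω, y ω) = 0) (hvar : (∫ ω, (y ω) ^ 2) = 1)
    -- unimodality: the CDF is convex left of a mode m and concave right of it
    (m : ℝ)
    (hconv : ConvexOn ℝ (Set.Iio m) (fun t => (ℙ {ω | y ω ≤ t}).toReal))
    (hconc : ConcaveOn ℝ (Set.Ioi m) (fun t => (ℙ {ω | y ω ≤ t}).toReal))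
    -- the two-sided Vysochanskij–Petunin inequality, which may be assumed
    (hVP : ∀ a r : ℝ, r ^ 2 ≥ (8 / 3) * ∫ ω, (y ω - a) ^ 2 →
      (ℙ {ω | |y ω - a| ≥ r}).toReal ≤ (4 / 9) * (∫ ω, (y ω - a) ^ 2) / r ^ 2)
    (lam : ℝ) (hlam : lam > Real.sqrt (5 / 3)) :
    (ℙ {ω | y ω ≥ lam}).toReal ≤ 4 / (9 * (lam ^ 2 + 1)) := by
  have hs : (0:ℝ) < Real.sqrt (5/3) := Real.sqrt_pos.mpr (by norm_num)
  have hlam0 : 0 < lam := hs.trans hlam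
  have hlamsq : (5:ℝ)/3 < lam ^ 2 := by
    have := Real.sq_sqrt (by norm_num : (0:ℝ) ≤ 5/3)
    nlinarith [hs.le, hlam]
  set δ : ℝ := 1 / lam with hδ
  have hδpos : 0 < δ := by positivity
  -- compute the shifted second moment
  have hI : (∫ ω, (y ω - (-δ)) ^ 2) = 1 + δ ^ 2 := by
    have hfun : (fun ω => (y ω - (-δ)) ^ 2)
        = fun ω => (y ω) ^ 2 + ((2*δ) * y ω + δ ^ 2) := by
      funext ω; ring
    have hg : Integrable (fun ω => (2*δ) * y ω + δ ^ 2) ℙ :=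
      (hint.const_mul (2*δ)).add (integrable_const _)
    have hg1 : Integrable (fun ω => (2*δ) * y ω) ℙ := hint.const_mul (2*δ)
    rw [hfun, integral_add hint2 hg, integral_add hg1 (integrable_const _),
      integral_const_mul, hmean, hvar, integral_const]
    simp
  -- the radius condition
  have hr : (lam + δ) ^ 2 ≥ (8/3) * ∫ ω, (y ω - (-δ)) ^ 2 := by
    rw [hI, hδ]
    have h1 : lam ≠ 0 := ne_of_gt hlam0
    rw [ge_iff_le, div_pow, one_pow, ← sub_nonneg]
    have key : (lam + 1/lam)^2 - (8/3)*(1 + 1/lam^2)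
        = (lam^2 - 5/3) * (lam^2 + 1) / lam^2 := by
      field_simp; ring
    rw [key]
    apply div_nonneg (mul_nonneg (by linarith) (by positivity)) (by positivity)
  have hVPap := hVP (-δ) (lam + δ) hr
  rw [hI] at hVPap
  -- monotonicity
  have hsub : {ω | y ω ≥ lam} ⊆ {ω | |y ω - (-δ)| ≥ lam + δ} := by
    intro ω hω
    simp only [Set.mem_setOf_eq] at hω ⊢
    rw [sub_neg_eq_add, abs_of_nonneg (by linarith)]
    linarith
  have hmono : (ℙ {ω | y ω ≥ lam}).toReal ≤ (ℙ {ω | |y ω - (-δ)| ≥ lam + δ}).toReal :=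
    ENNReal.toReal_mono (measure_ne_top _ _) (measure_mono hsub)
  -- the bound equals the claimed one
  have heq : (4/9) * (1 + δ ^ 2) / (lam + δ) ^ 2 = 4 / (9 * (lam ^ 2 + 1)) := by
    rw [hδ]
    have h1 : lam ≠ 0 := ne_of_gt hlam0
    have h2 : lam ^ 2 + 1 ≠ 0 := by positivity
    field_simp
  linarith [hmono, hVPap, heq ▸ hVPap]
end
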